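/- Proposition 2 (type-ii-a inputs). Assume J¹ ≠ 0. Let k₁ be an integer with 2 ≤ k₁ and 2·k₁ ≤ L, and let Q be a k₁-candidate. Then the expansion coefficient c_A of Q vanishes for every (k₁,ℓ₂)-support Pauli product A of type ii-a, for every ℓ₂ ∈ {1,...,L} and every position of its bounding box. -/

import Mathlib

open scoped Classical

namespace Ising2D

/-- Single-site Pauli operators (including the identity). -/
inductive PauliOp : Type
  | I : PauliOp
  | X : PauliOp
  | Y : PauliOp
  | Z : PauliOp
  deriving DecidableEq

/-- The 2×2 matrices of the single-site Pauli operators. -/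
noncomputable def pauliMat : PauliOp → Matrix (Fin 2) (Fin 2) ℂ
  | PauliOp.I => 1
  | PauliOp.X => !![0, 1; 1, 0]
  | PauliOp.Y => !![0, -Complex.I; Complex.I, 0]
  | PauliOp.Z => !![1, 0; 0, -1]

/-- Sites of the two-dimensional periodic lattice `Λ = (ℤ/L)²`. -/
abbrev Site (L : ℕ) := ZMod L × ZMod L

variable {L : ℕ}

/-- The matrix (on `⨂_{r ∈ Λ} ℂ²`, realized as matrices indexed by spin
configurations `Λ → Fin 2`) of the Pauli product `∏_r A_r`. -/
noncomputable def pauliProd [NeZero L] (A : Site L → PauliOp) :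
    Matrix (Site L → Fin 2) (Site L → Fin 2) ℂ :=
  fun s t => ∏ p : Site L, pauliMat (A p) (s p) (t p)

/-- The (unique) expansion coefficient of an operator `Q` on the Pauli product `A`,
obtained from the trace inner product (Pauli products form an orthogonal basis with
`Tr (P_A P_B) = 2^|Λ| δ_{A,B}`). -/
noncomputable def coeff [NeZero L] (Q : Matrix (Site L → Fin 2) (Site L → Fin 2) ℂ)
    (A : Site L → PauliOp) : ℂ :=
  Matrix.trace (pauliProd A * Q) / 2 ^ Fintype.card (Site L)

/-- The Pauli product acting as `P` at site `r` and trivially elsewhere. -/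
def singleSite (r : Site L) (P : PauliOp) : Site L → PauliOp :=
  fun p => if p = r then P else PauliOp.I

/-- The Pauli product acting as `Z` at the two sites `r, s` and trivially elsewhere. -/
def twoSiteZZ (r s : Site L) : Site L → PauliOp :=
  fun p => if p = r ∨ p = s then PauliOp.Z else PauliOp.I

/-- The Hamiltonian
`H = Σ_r (J¹ Z_r Z_{r+e₁} + J² Z_r Z_{r+e₂} + hˣ X_r + h^z Z_r)`. -/
noncomputable def ham [NeZero L] (J1 J2 hx hz : ℝ) :
    Matrix (Site L → Fin 2) (Site L → Fin 2) ℂ :=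
  ∑ r : Site L,
    ((J1 : ℂ) • pauliProd (twoSiteZZ r (r.1 + 1, r.2))
      + (J2 : ℂ) • pauliProd (twoSiteZZ r (r.1, r.2 + 1))
      + (hx : ℂ) • pauliProd (singleSite r PauliOp.X)
      + (hz : ℂ) • pauliProd (singleSite r PauliOp.Z))

/-- `A` is an `(ℓ₁,ℓ₂)`-support Pauli product with (minimal) bounding box cornered
at `r`: its support is contained in the box
`{r₁,...,r₁+ℓ₁−1} × {r₂,...,r₂+ℓ₂−1}` and it acts nontrivially at some site on each
of the four edges of the box. -/
def IsSupportedAt (A : Site L → PauliOp) (r : Site L) (ℓ₁ ℓ₂ : ℕ) : Prop :=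
  (∀ p : Site L, A p ≠ PauliOp.I →
      (∃ n : ℕ, n < ℓ₁ ∧ p.1 = r.1 + (n : ZMod L)) ∧
      (∃ n : ℕ, n < ℓ₂ ∧ p.2 = r.2 + (n : ZMod L))) ∧
  (∃ p : Site L, A p ≠ PauliOp.I ∧ p.1 = r.1) ∧
  (∃ p : Site L, A p ≠ PauliOp.I ∧ p.1 = r.1 + ((ℓ₁ - 1 : ℕ) : ZMod L)) ∧
  (∃ p : Site L, A p ≠ PauliOp.I ∧ p.2 = r.2) ∧
  (∃ p : Site L, A p ≠ PauliOp.I ∧ p.2 = r.2 + ((ℓ₂ - 1 : ℕ) : ZMod L))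

/-- `A` is an `(ℓ₁,ℓ₂)`-support Pauli product. -/
def IsSupportOp (ℓ₁ ℓ₂ : ℕ) (A : Site L → PauliOp) : Prop :=
  ∃ r : Site L, IsSupportedAt A r ℓ₁ ℓ₂

/-- `Q` is a `(k₁,k₂)`-local conserved quantity: it commutes with `H`, it is a linear
combination of `(ℓ₁,ℓ₂)`-support Pauli products with `ℓ₁ ≤ k₁`, `ℓ₂ ≤ k₂`, and the
maximal `ℓ₁` (resp. `ℓ₂`) occurring with nonzero coefficient equals `k₁` (resp. `k₂`). -/
def IsLocalConserved [NeZero L] (J1 J2 hx hz : ℝ) (k₁ k₂ : ℕ)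
    (Q : Matrix (Site L → Fin 2) (Site L → Fin 2) ℂ) : Prop :=
  Q * ham (L := L) J1 J2 hx hz = ham (L := L) J1 J2 hx hz * Q ∧
  (∀ A, coeff Q A ≠ 0 → ∃ ℓ₁ ℓ₂ : ℕ, ℓ₁ ≤ k₁ ∧ ℓ₂ ≤ k₂ ∧ IsSupportOp ℓ₁ ℓ₂ A) ∧
  (∃ A ℓ₂, coeff Q A ≠ 0 ∧ ℓ₂ ≤ k₂ ∧ IsSupportOp k₁ ℓ₂ A) ∧
  (∃ A ℓ₁, coeff Q A ≠ 0 ∧ ℓ₁ ≤ k₁ ∧ IsSupportOp ℓ₁ k₂ A)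

/-- `Q` is a `k₁`-candidate: it commutes with `H` and is a linear combination of
`(ℓ₁,ℓ₂)`-support Pauli products with `ℓ₁ ≤ k₁` (`ℓ₂ ≤ L` arbitrary). -/
def IsCandidate [NeZero L] (J1 J2 hx hz : ℝ) (k₁ : ℕ)
    (Q : Matrix (Site L → Fin 2) (Site L → Fin 2) ℂ) : Prop :=
  Q * ham (L := L) J1 J2 hx hz = ham (L := L) J1 J2 hx hz * Q ∧
  ∀ A, coeff Q A ≠ 0 → ∃ ℓ₁ ℓ₂ : ℕ, ℓ₁ ≤ k₁ ∧ ℓ₂ ≤ L ∧ IsSupportOp ℓ₁ ℓ₂ A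

/-- First coordinate of the upper edge of a box cornered at `r`. -/
def upperEdge (r : Site L) : ZMod L := r.1

/-- First coordinate of the lower edge of a box cornered at `r` with height `ℓ₁`. -/
def lowerEdge (r : Site L) (ℓ₁ : ℕ) : ZMod L := r.1 + ((ℓ₁ - 1 : ℕ) : ZMod L)

/-- `A` contains `X` or `Y` at some site with first coordinate `a`. -/
def HasXYOn (A : Site L → PauliOp) (a : ZMod L) : Prop :=
  ∃ p : Site L, p.1 = a ∧ (A p = PauliOp.X ∨ A p = PauliOp.Y)

/-- Every operator of `A` at sites with first coordinate `a` is `Z` or `I`. -/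
def AllZIOn (A : Site L → PauliOp) (a : ZMod L) : Prop :=
  ∀ p : Site L, p.1 = a → A p = PauliOp.Z ∨ A p = PauliOp.I

/-- `A` carries at least two `Z`'s on the line with first coordinate `a`. -/
def TwoZOn (A : Site L → PauliOp) (a : ZMod L) : Prop :=
  ∃ p q : Site L, p ≠ q ∧ p.1 = a ∧ q.1 = a ∧ A p = PauliOp.Z ∧ A q = PauliOp.Z

/-- `A` carries exactly one `Z` on the line with first coordinate `a`. -/
def OneZOn (A : Site L → PauliOp) (a : ZMod L) : Prop :=
  ∃! p : Site L, p.1 = a ∧ A p = PauliOp.Z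

/-- The single-column Pauli product with `P` at site `r`, `R` at site `r+(k−1)e₁`,
`X` at sites `r+n e₁` for `n = 1,...,k−2`, and `I` elsewhere. -/
noncomputable def colPQ (P R : PauliOp) (k : ℕ) (r : Site L) : Site L → PauliOp :=
  fun p =>
    if p = r then P
    else if p = (r.1 + ((k - 1 : ℕ) : ZMod L), r.2) then R
    else if ∃ n : ℕ, 1 ≤ n ∧ n ≤ k - 2 ∧ p = (r.1 + (n : ZMod L), r.2) then PauliOp.X
    else PauliOp.I


section Aux
open PauliOp


def mulP : PauliOp → PauliOp → PauliOp
  | I, b => b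
  | X, I => X | X, X => I | X, Y => Z | X, Z => Y
  | Y, I => Y | Y, X => Z | Y, Y => I | Y, Z => X
  | Z, I => Z | Z, X => Y | Z, Y => X | Z, Z => I

noncomputable def phaseP : PauliOp → PauliOp → ℂ
  | X, Y => Complex.I
  | Y, Z => Complex.I
  | Z, X => Complex.I
  | Y, X => -Complex.I
  | Z, Y => -Complex.I
  | X, Z => -Complex.I
  | _, _ => 1

lemma mulP_I_right (a : PauliOp) : mulP a I = a := by cases a <;> rfl
lemma mulP_comm (a b : PauliOp) : mulP a b = mulP b a := by cases a <;> cases b <;> rfl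
lemma mulP_cancel (a b : PauliOp) : mulP (mulP a b) b = a := by cases a <;> cases b <;> rfl
lemma phaseP_I_right (a : PauliOp) : phaseP a I = 1 := by cases a <;> rfl
lemma phaseP_I_left (a : PauliOp) : phaseP I a = 1 := by cases a <;> rfl

lemma pauliMat_mul (a b : PauliOp) :
    pauliMat a * pauliMat b = phaseP a b • pauliMat (mulP a b) := by
  cases a <;> cases b <;> simp [pauliMat, mulP, phaseP, Matrix.one_fin_two]

lemma pauliProd_mul [NeZero L] (A B : Site L → PauliOp) :
    pauliProd A * pauliProd B
      = (∏ p : Site L, phaseP (A p) (B p)) • pauliProd (fun p => mulP (A p) (B p)) := by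
  ext s t
  show ∑ u : Site L → Fin 2, (∏ p : Site L, pauliMat (A p) (s p) (u p))
      * (∏ p : Site L, pauliMat (B p) (u p) (t p)) = _
  have h1 : ∀ u : Site L → Fin 2,
      (∏ p : Site L, pauliMat (A p) (s p) (u p)) * (∏ p : Site L, pauliMat (B p) (u p) (t p))
        = ∏ p : Site L, (pauliMat (A p) (s p) (u p) * pauliMat (B p) (u p) (t p)) := by
    intro u; rw [← Finset.prod_mul_distrib]
  simp only [h1]
  rw [show (∑ u : Site L → Fin 2, ∏ p : Site L,
        (pauliMat (A p) (s p) (u p) * pauliMat (B p) (u p) (t p)))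
      = ∏ p : Site L, ∑ x : Fin 2, pauliMat (A p) (s p) x * pauliMat (B p) x (t p) by
    rw [Finset.prod_univ_sum, Fintype.piFinset_univ]]
  have h2 : ∀ p : Site L, (∑ x : Fin 2, pauliMat (A p) (s p) x * pauliMat (B p) x (t p))
      = phaseP (A p) (B p) * pauliMat (mulP (A p) (B p)) (s p) (t p) := by
    intro p
    have := congrFun (congrFun (pauliMat_mul (A p) (B p)) (s p)) (t p)
    simpa [Matrix.mul_apply] using this
  simp only [h2]
  rw [Finset.prod_mul_distrib]
  rfl

/-- The phase `Φ(A,B) = ∏_p phaseP (A p) (B p)`. -/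
noncomputable def phi [NeZero L] (A B : Site L → PauliOp) : ℂ :=
  ∏ p : Site L, phaseP (A p) (B p)

lemma phi_single_right [NeZero L] (B : Site L → PauliOp) (r : Site L) (P : PauliOp) :
    phi B (singleSite r P) = phaseP (B r) P := by
  unfold phi
  rw [← Finset.prod_subset (Finset.subset_univ {r})
      (by intro p _ hp
          simp only [Finset.mem_singleton] at hp
          simp [singleSite, hp, phaseP_I_right])]
  simp [singleSite]

lemma phi_single_left [NeZero L] (B : Site L → PauliOp) (r : Site L) (P : PauliOp) :
    phi (singleSite r P) B = phaseP P (B r) := by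
  unfold phi
  rw [← Finset.prod_subset (Finset.subset_univ {r})
      (by intro p _ hp
          simp only [Finset.mem_singleton] at hp
          simp [singleSite, hp, phaseP_I_left])]
  simp [singleSite]

lemma phi_two_right [NeZero L] (B : Site L → PauliOp) {r s : Site L} (h : r ≠ s) :
    phi B (twoSiteZZ r s) = phaseP (B r) Z * phaseP (B s) Z := by
  unfold phi
  rw [← Finset.prod_subset (Finset.subset_univ {r, s})
      (by intro p _ hp
          simp only [Finset.mem_insert, Finset.mem_singleton] at hp
          push_neg at hp
          simp [twoSiteZZ, hp.1, hp.2, phaseP_I_right])]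
  rw [Finset.prod_pair h]
  simp [twoSiteZZ]

lemma phi_two_left [NeZero L] (B : Site L → PauliOp) {r s : Site L} (h : r ≠ s) :
    phi (twoSiteZZ r s) B = phaseP Z (B r) * phaseP Z (B s) := by
  unfold phi
  rw [← Finset.prod_subset (Finset.subset_univ {r, s})
      (by intro p _ hp
          simp only [Finset.mem_insert, Finset.mem_singleton] at hp
          push_neg at hp
          simp [twoSiteZZ, hp.1, hp.2, phaseP_I_left])]
  rw [Finset.prod_pair h]
  simp [twoSiteZZ]

/-- The summand attached to a Hamiltonian term pattern `T`. -/
noncomputable def dTerm [NeZero L] (Q : Matrix (Site L → Fin 2) (Site L → Fin 2) ℂ)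
    (B T : Site L → PauliOp) : ℂ :=
  (phi B T - phi T B) * coeff Q (fun p => mulP (B p) (T p))

lemma key_identity [NeZero L] (J1 J2 hx hz : ℝ)
    (Q : Matrix (Site L → Fin 2) (Site L → Fin 2) ℂ)
    (hc : Q * ham (L := L) J1 J2 hx hz = ham (L := L) J1 J2 hx hz * Q)
    (B : Site L → PauliOp) :
    ∑ r : Site L,
      ((J1 : ℂ) * dTerm Q B (twoSiteZZ r (r.1 + 1, r.2))
        + (J2 : ℂ) * dTerm Q B (twoSiteZZ r (r.1, r.2 + 1))
        + (hx : ℂ) * dTerm Q B (singleSite r PauliOp.X)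
        + (hz : ℂ) * dTerm Q B (singleSite r PauliOp.Z)) = 0 := by
  classical
  have hN : (2 : ℂ) ^ Fintype.card (Site L) ≠ 0 := pow_ne_zero _ two_ne_zero
  set H := ham (L := L) J1 J2 hx hz with hH
  set PB := pauliProd B with hPBdef
  have key0 : Matrix.trace ((PB * H - H * PB) * Q) = 0 := by
    rw [Matrix.sub_mul, Matrix.trace_sub, Matrix.mul_assoc PB H Q, ← hc,
        ← Matrix.mul_assoc PB Q H, Matrix.trace_mul_comm (PB * Q) H,
        ← Matrix.mul_assoc H PB Q, sub_self]
  -- the trace of a single commutator term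
  have hterm : ∀ T : Site L → PauliOp,
      Matrix.trace ((PB * pauliProd T - pauliProd T * PB) * Q)
        = dTerm Q B T * 2 ^ Fintype.card (Site L) := by
    intro T
    rw [hPBdef, pauliProd_mul, pauliProd_mul]
    have hmm : (fun p => mulP (T p) (B p)) = (fun p => mulP (B p) (T p)) :=
      funext fun p => mulP_comm (T p) (B p)
    rw [hmm, ← sub_smul, Matrix.smul_mul, Matrix.trace_smul]
    unfold dTerm coeff phi
    field_simp
    exact smul_eq_mul _ _
  -- expand the Hamiltonian
  have expand : Matrix.trace ((PB * H - H * PB) * Q)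
      = ∑ r : Site L,
          ((J1 : ℂ) * Matrix.trace ((PB * pauliProd (twoSiteZZ r (r.1 + 1, r.2))
              - pauliProd (twoSiteZZ r (r.1 + 1, r.2)) * PB) * Q)
            + (J2 : ℂ) * Matrix.trace ((PB * pauliProd (twoSiteZZ r (r.1, r.2 + 1))
              - pauliProd (twoSiteZZ r (r.1, r.2 + 1)) * PB) * Q)
            + (hx : ℂ) * Matrix.trace ((PB * pauliProd (singleSite r PauliOp.X)
              - pauliProd (singleSite r PauliOp.X) * PB) * Q)
            + (hz : ℂ) * Matrix.trace ((PB * pauliProd (singleSite r PauliOp.Z)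
              - pauliProd (singleSite r PauliOp.Z) * PB) * Q)) := by
    rw [hH]
    unfold ham
    rw [Matrix.mul_sum, Matrix.sum_mul, ← Finset.sum_sub_distrib, Matrix.sum_mul,
        Matrix.trace_sum]
    refine Finset.sum_congr rfl fun r _ => ?_
    simp only [Matrix.mul_add, Matrix.add_mul, Matrix.mul_smul, Matrix.smul_mul]
    rw [show ∀ a1 a2 a3 a4 b1 b2 b3 b4 : Matrix (Site L → Fin 2) (Site L → Fin 2) ℂ,
        (a1 + a2 + a3 + a4) - (b1 + b2 + b3 + b4)
          = (a1 - b1) + ((a2 - b2) + ((a3 - b3) + (a4 - b4))) from by intros; abel]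
    simp only [Matrix.add_mul, Matrix.trace_add, ← smul_sub, Matrix.smul_mul,
      Matrix.trace_smul, smul_eq_mul]
    ring
  rw [expand] at key0
  simp only [hterm] at key0
  have : (∑ r : Site L,
      ((J1 : ℂ) * dTerm Q B (twoSiteZZ r (r.1 + 1, r.2))
        + (J2 : ℂ) * dTerm Q B (twoSiteZZ r (r.1, r.2 + 1))
        + (hx : ℂ) * dTerm Q B (singleSite r PauliOp.X)
        + (hz : ℂ) * dTerm Q B (singleSite r PauliOp.Z))) * 2 ^ Fintype.card (Site L) = 0 := by
    rw [Finset.sum_mul]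
    rw [← key0]
    refine Finset.sum_congr rfl fun r _ => ?_
    ring
  exact (mul_eq_zero.mp this).resolve_right hN


lemma cast_row_inj [NeZero L] {m n : ℕ} (hm : m < L) (hn : n < L)
    (h : (m : ZMod L) = n) : m = n := by
  have := congrArg ZMod.val h
  rwa [ZMod.val_cast_of_lt hm, ZMod.val_cast_of_lt hn] at this

lemma width_kill [NeZero L] {k₁ : ℕ} (hk₁ : 1 ≤ k₁) (hk₁L : 2 * k₁ ≤ L)
    {Q : Matrix (Site L → Fin 2) (Site L → Fin 2) ℂ}
    (hQ2 : ∀ A : Site L → PauliOp, coeff Q A ≠ 0 →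
        ∃ ℓ₁ ℓ₂ : ℕ, ℓ₁ ≤ k₁ ∧ ℓ₂ ≤ L ∧ IsSupportOp ℓ₁ ℓ₂ A)
    (C : Site L → PauliOp) (s1 s2 : Site L)
    (h1 : C s1 ≠ I) (h2 : C s2 ≠ I) (hrow : s2.1 = s1.1 + (k₁ : ZMod L)) :
    coeff Q C = 0 := by
  by_contra hco
  obtain ⟨ℓ₁, ℓ₂, hℓ₁, -, r', hr'⟩ := hQ2 C hco
  obtain ⟨⟨m, hm, hs1⟩, -⟩ := hr'.1 s1 h1
  obtain ⟨⟨m', hm', hs2⟩, -⟩ := hr'.1 s2 h2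
  rw [hs1, hs2] at hrow
  have hmm : (m' : ZMod L) = ((m + k₁ : ℕ) : ZMod L) := by
    push_cast
    refine add_left_cancel (a := r'.1) ?_
    rw [← add_assoc]; exact hrow
  have hm'2 : m' < L := by omega
  have hmk : m + k₁ < L := by omega
  have := cast_row_inj hm'2 hmk hmm
  omega

lemma phaseP_swap_Z {a : PauliOp} (h : a = Z ∨ a = I) : phaseP a Z = phaseP Z a := by
  rcases h with h | h <;> subst h <;> rfl

lemma not_ZI {a : PauliOp} (h : ¬(a = Z ∨ a = I)) : a = X ∨ a = Y := by
  cases a <;> simp_all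

lemma master [NeZero L] (J1 J2 hx hz : ℝ) (hJ1 : J1 ≠ 0)
    (k₁ : ℕ) (hk₁ : 2 ≤ k₁) (hk₁L : 2 * k₁ ≤ L)
    (Q : Matrix (Site L → Fin 2) (Site L → Fin 2) ℂ)
    (hQc : Q * ham (L := L) J1 J2 hx hz = ham (L := L) J1 J2 hx hz * Q)
    (hQ2 : ∀ A, coeff Q A ≠ 0 → ∃ ℓ₁ ℓ₂ : ℕ, ℓ₁ ≤ k₁ ∧ ℓ₂ ≤ L ∧ IsSupportOp ℓ₁ ℓ₂ A)
    (B : Site L → PauliOp) (x : ZMod L) (u q1 q2 rsp : Site L)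
    (hBu : B u = Z)
    (hrows : (u.1 = x ∧ q1.1 = x + (k₁ : ZMod L) ∧ q2.1 = x + (k₁ : ZMod L))
           ∨ (u.1 = x + (k₁ : ZMod L) ∧ q1.1 = x ∧ q2.1 = x))
    (hq1 : B q1 = Z) (hq2 : B q2 = Z) (hq12 : q1 ≠ q2)
    (hXY : ∀ q, B q = X ∨ B q = Y → ∃ n : ℕ, 1 ≤ n ∧ n + 1 ≤ k₁ ∧ q.1 = x + (n : ZMod L))
    (hadj : ∀ v, (B v = X ∨ B v = Y) → v.2 = u.2 →
        (v.1 = u.1 + 1 → u = rsp ∧ v = (rsp.1 + 1, rsp.2)) ∧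
        (u.1 = v.1 + 1 → v = rsp ∧ u = (rsp.1 + 1, rsp.2)))
    (hsp : (B rsp = Z ∧ (B (rsp.1 + 1, rsp.2) = X ∨ B (rsp.1 + 1, rsp.2) = Y))
         ∨ ((B rsp = X ∨ B rsp = Y) ∧ B (rsp.1 + 1, rsp.2) = Z)) :
    coeff Q (fun p => mulP (B p) (twoSiteZZ rsp (rsp.1 + 1, rsp.2) p)) = 0 := by
  have hk₁L' : k₁ < L := by omega
  have hcast : ∀ m n : ℕ, m < L → n < L → (m : ZMod L) = (n : ZMod L) → m = n :=
    fun m n hm hn h => cast_row_inj hm hn h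
  have h10 : (1 : ZMod L) ≠ 0 := by
    intro h
    have h' : ((1 : ℕ) : ZMod L) = ((0 : ℕ) : ZMod L) := by push_cast; exact h
    have := hcast 1 0 (by omega) (by omega) h'
    omega
  have hint : ∀ n : ℕ, 1 ≤ n → n + 1 ≤ k₁ →
      x + (n : ZMod L) ≠ u.1 ∧ x + (n : ZMod L) ≠ q1.1 ∧ x + (n : ZMod L) ≠ q2.1 := by
    intro n h1n hnk
    have hnx : x + (n : ZMod L) ≠ x := by
      intro h
      have h' : x + (n : ZMod L) = x + ((0 : ℕ) : ZMod L) := by push_cast; simpa using h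
      have := hcast n 0 (by omega) (by omega) (add_left_cancel h')
      omega
    have hnk' : x + (n : ZMod L) ≠ x + (k₁ : ZMod L) := by
      intro h
      have := hcast n k₁ (by omega) (by omega) (add_left_cancel h)
      omega
    rcases hrows with ⟨hu, hr1, hr2⟩ | ⟨hu, hr1, hr2⟩ <;>
      rw [hu, hr1, hr2] <;> exact ⟨by assumption, by assumption, by assumption⟩
  have killer : ∀ C : Site L → PauliOp, C u ≠ I → (C q1 ≠ I ∨ C q2 ≠ I) → coeff Q C = 0 := by
    intro C hCu hCq
    rcases hrows with ⟨hu, hr1, hr2⟩ | ⟨hu, hr1, hr2⟩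
    · rcases hCq with h | h
      · exact width_kill (by omega) hk₁L hQ2 C u q1 hCu h (by rw [hr1, hu])
      · exact width_kill (by omega) hk₁L hQ2 C u q2 hCu h (by rw [hr2, hu])
    · rcases hCq with h | h
      · exact width_kill (by omega) hk₁L hQ2 C q1 u h hCu (by rw [hu, hr1])
      · exact width_kill (by omega) hk₁L hQ2 C q2 u h hCu (by rw [hu, hr2])
  have hSZ : ∀ r' : Site L, dTerm Q B (singleSite r' Z) = 0 := by
    intro r'
    unfold dTerm
    rw [phi_single_right, phi_single_left]
    rcases hr : B r' with _ | _ | _ | _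
    · simp [phaseP]
    · refine mul_eq_zero_of_right _ (killer _ ?_ (Or.inl ?_))
      · have hur : u ≠ r' := by intro h; rw [h, hr] at hBu; exact absurd hBu (by simp)
        show mulP (B u) (singleSite r' Z u) ≠ I
        rw [show singleSite r' Z u = I from by simp [singleSite, hur], hBu]
        simp [mulP]
      · have hqr : q1 ≠ r' := by intro h; rw [h, hr] at hq1; exact absurd hq1 (by simp)
        show mulP (B q1) (singleSite r' Z q1) ≠ I
        rw [show singleSite r' Z q1 = I from by simp [singleSite, hqr], hq1]
        simp [mulP]
    · refine mul_eq_zero_of_right _ (killer _ ?_ (Or.inl ?_))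
      · have hur : u ≠ r' := by intro h; rw [h, hr] at hBu; exact absurd hBu (by simp)
        show mulP (B u) (singleSite r' Z u) ≠ I
        rw [show singleSite r' Z u = I from by simp [singleSite, hur], hBu]
        simp [mulP]
      · have hqr : q1 ≠ r' := by intro h; rw [h, hr] at hq1; exact absurd hq1 (by simp)
        show mulP (B q1) (singleSite r' Z q1) ≠ I
        rw [show singleSite r' Z q1 = I from by simp [singleSite, hqr], hq1]
        simp [mulP]
    · simp [phaseP]
  have hSX : ∀ r' : Site L, dTerm Q B (singleSite r' X) = 0 := by
    intro r'
    unfold dTerm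
    rw [phi_single_right, phi_single_left]
    rcases hr : B r' with _ | _ | _ | _
    · simp [phaseP]
    · simp [phaseP]
    · refine mul_eq_zero_of_right _ (killer _ ?_ (Or.inl ?_))
      · have hur : u ≠ r' := by intro h; rw [h, hr] at hBu; exact absurd hBu (by simp)
        show mulP (B u) (singleSite r' X u) ≠ I
        rw [show singleSite r' X u = I from by simp [singleSite, hur], hBu]
        simp [mulP]
      · have hqr : q1 ≠ r' := by intro h; rw [h, hr] at hq1; exact absurd hq1 (by simp)
        show mulP (B q1) (singleSite r' X q1) ≠ I
        rw [show singleSite r' X q1 = I from by simp [singleSite, hqr], hq1]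
        simp [mulP]
    · refine mul_eq_zero_of_right _ (killer _ ?_ (Or.inl ?_))
      · show mulP (B u) (singleSite r' X u) ≠ I
        by_cases hur : u = r'
        · rw [show singleSite r' X u = X from by simp [singleSite, hur], hBu]
          simp [mulP]
        · rw [show singleSite r' X u = I from by simp [singleSite, hur], hBu]
          simp [mulP]
      · show mulP (B q1) (singleSite r' X q1) ≠ I
        by_cases hqr : q1 = r'
        · rw [show singleSite r' X q1 = X from by simp [singleSite, hqr], hq1]
          simp [mulP]
        · rw [show singleSite r' X q1 = I from by simp [singleSite, hqr], hq1]
          simp [mulP]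
  have hbond : ∀ v1 v2 : Site L, v1 ≠ v2 →
      (((B v1 = X ∨ B v1 = Y) ∨ (B v2 = X ∨ B v2 = Y)) → (u ≠ v1 ∧ u ≠ v2)) →
      dTerm Q B (twoSiteZZ v1 v2) = 0 := by
    intro v1 v2 hne hu
    unfold dTerm
    rw [phi_two_right B hne, phi_two_left B hne]
    have kb : ((B v1 = X ∨ B v1 = Y) ∨ (B v2 = X ∨ B v2 = Y)) →
        coeff Q (fun p => mulP (B p) (twoSiteZZ v1 v2 p)) = 0 := by
      intro hxy
      obtain ⟨hu1, hu2⟩ := hu hxy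
      have hBq : ¬(q1 = v1 ∨ q1 = v2) ∨ ¬(q2 = v1 ∨ q2 = v2) := by
        by_contra hcon
        push_neg at hcon
        obtain ⟨hc1, hc2⟩ := hcon
        have hz1 : B v1 = Z ∧ B v2 = Z := by
          rcases hc1 with h1 | h1 <;> rcases hc2 with h2 | h2
          · exact absurd (h1.trans h2.symm) hq12
          · rw [h1] at hq1; rw [h2] at hq2; exact ⟨hq1, hq2⟩
          · rw [h1] at hq1; rw [h2] at hq2; exact ⟨hq2, hq1⟩
          · exact absurd (h1.trans h2.symm) hq12
        rcases hxy with (h | h) | (h | h)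
        · rw [hz1.1] at h; exact PauliOp.noConfusion h
        · rw [hz1.1] at h; exact PauliOp.noConfusion h
        · rw [hz1.2] at h; exact PauliOp.noConfusion h
        · rw [hz1.2] at h; exact PauliOp.noConfusion h
      refine killer _ ?_ ?_
      · show mulP (B u) (twoSiteZZ v1 v2 u) ≠ I
        rw [show twoSiteZZ v1 v2 u = I from by
              show (if u = v1 ∨ u = v2 then Z else I) = I
              rw [if_neg]; push_neg; exact ⟨hu1, hu2⟩, hBu]
        simp [mulP]
      · rcases hBq with h | h
        · refine Or.inl ?_
          show mulP (B q1) (twoSiteZZ v1 v2 q1) ≠ I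
          rw [show twoSiteZZ v1 v2 q1 = I from by
                show (if q1 = v1 ∨ q1 = v2 then Z else I) = I
                rw [if_neg h], hq1]
          simp [mulP]
        · refine Or.inr ?_
          show mulP (B q2) (twoSiteZZ v1 v2 q2) ≠ I
          rw [show twoSiteZZ v1 v2 q2 = I from by
                show (if q2 = v1 ∨ q2 = v2 then Z else I) = I
                rw [if_neg h], hq2]
          simp [mulP]
    by_cases hb1 : B v1 = Z ∨ B v1 = I
    · by_cases hb2 : B v2 = Z ∨ B v2 = I
      · rw [phaseP_swap_Z hb1, phaseP_swap_Z hb2, sub_self, zero_mul]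
      · exact mul_eq_zero_of_right _ (kb (Or.inr (not_ZI hb2)))
    · exact mul_eq_zero_of_right _ (kb (Or.inl (not_ZI hb1)))
  have hSH : ∀ r' : Site L, dTerm Q B (twoSiteZZ r' (r'.1, r'.2 + 1)) = 0 := by
    intro r'
    refine hbond _ _ ?_ ?_
    · intro h
      have h2 := congrArg Prod.snd h
      simp only at h2
      exact h10 ((left_eq_add).mp h2)
    · intro hxy
      have hvrow : ∃ nn : ℕ, 1 ≤ nn ∧ nn + 1 ≤ k₁ ∧ r'.1 = x + (nn : ZMod L) := by
        rcases hxy with h | h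
        · exact hXY _ h
        · obtain ⟨n, a1, a2, a3⟩ := hXY _ h
          exact ⟨n, a1, a2, a3⟩
      obtain ⟨n, h1n, hnk, hr⟩ := hvrow
      have hi := hint n h1n hnk
      constructor
      · intro h; exact hi.1 (by rw [← hr, h])
      · intro h; exact hi.1 (by rw [← hr, h])
  have hSV : ∀ r' : Site L, r' ≠ rsp → dTerm Q B (twoSiteZZ r' (r'.1 + 1, r'.2)) = 0 := by
    intro r' hrsp
    refine hbond _ _ ?_ ?_
    · intro h
      have h2 := congrArg Prod.fst h
      simp only at h2
      exact h10 ((left_eq_add).mp h2)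
    · intro hxy
      constructor
      · intro h
        rcases hxy with hv | hv
        · rw [← h, hBu] at hv; simp at hv
        · have h2 : ((r'.1 + 1, r'.2) : Site L).2 = u.2 := by rw [← h]
          have h1 : ((r'.1 + 1, r'.2) : Site L).1 = u.1 + 1 := by rw [← h]
          have hres := (hadj _ hv h2).1 h1
          exact hrsp (h.symm.trans hres.1)
      · intro h
        rcases hxy with hv | hv
        · have h2 : (r' : Site L).2 = u.2 := by rw [h]
          have h1 : u.1 = r'.1 + 1 := by rw [h]
          have hres := (hadj _ hv h2).2 h1
          exact hrsp hres.1
        · rw [← h, hBu] at hv; simp at hv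
  -- assemble
  have hKI := key_identity J1 J2 hx hz Q hQc B
  rw [Finset.sum_eq_single_of_mem rsp (Finset.mem_univ rsp)
        (fun b _ hb => by rw [hSV b hb, hSH b, hSX b, hSZ b]; ring)] at hKI
  rw [hSH rsp, hSX rsp, hSZ rsp] at hKI
  have hKI' : (J1 : ℂ) * dTerm Q B (twoSiteZZ rsp (rsp.1 + 1, rsp.2)) = 0 := by
    linear_combination hKI
  have hd : dTerm Q B (twoSiteZZ rsp (rsp.1 + 1, rsp.2)) = 0 :=
    (mul_eq_zero.mp hKI').resolve_left (by exact_mod_cast hJ1)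
  have hne : rsp ≠ (rsp.1 + 1, rsp.2) := by
    intro h
    have h2 := congrArg Prod.fst h
    simp only at h2
    exact h10 ((left_eq_add).mp h2)
  unfold dTerm at hd
  rw [phi_two_right B hne, phi_two_left B hne] at hd
  refine (mul_eq_zero.mp hd).resolve_left ?_
  rcases hsp with ⟨h1, h2 | h2⟩ | ⟨h1 | h1, h2⟩ <;> rw [h1, h2] <;>
    simp only [show phaseP Z Z = 1 from rfl, show phaseP X Z = -Complex.I from rfl,
      show phaseP Z X = Complex.I from rfl, show phaseP Y Z = Complex.I from rfl,
      show phaseP Z Y = -Complex.I from rfl] <;>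
    intro hcc <;>
    [ (have : Complex.I = 0 := by linear_combination (-1/2 : ℂ) * hcc);
      (have : Complex.I = 0 := by linear_combination (1/2 : ℂ) * hcc);
      (have : Complex.I = 0 := by linear_combination (-1/2 : ℂ) * hcc);
      (have : Complex.I = 0 := by linear_combination (1/2 : ℂ) * hcc)] <;>
    exact Complex.I_ne_zero this

end Aux

section Main
open PauliOp

lemma twoSiteZZ_comm (r s : Site L) : twoSiteZZ r s = twoSiteZZ s r := by
  funext p; simp only [twoSiteZZ, or_comm]

lemma bond_cancel [NeZero L] (A : Site L → PauliOp) (u p : Site L) (hup : u ≠ p)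
    (hAu : A u = I) :
    (fun s => mulP ((if s = u then Z else if s = p then mulP (A s) Z else A s))
        (twoSiteZZ u p s)) = A := by
  funext s
  by_cases h1 : s = u
  · subst h1
    rw [if_pos rfl, show twoSiteZZ s p s = Z from by
      show (if s = s ∨ s = p then Z else I) = Z
      rw [if_pos (Or.inl rfl)], hAu]
    rfl
  · by_cases h2 : s = p
    · subst h2
      rw [if_neg h1, if_pos rfl, show twoSiteZZ u s s = Z from by
        show (if s = u ∨ s = s then Z else I) = Z
        rw [if_pos (Or.inr rfl)]]
      exact mulP_cancel (A s) Z
    · rw [if_neg h1, if_neg h2, show twoSiteZZ u p s = I from by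
        show (if s = u ∨ s = p then Z else I) = I
        rw [if_neg (by push_neg; exact ⟨h1, h2⟩)]]
      exact mulP_I_right (A s)

end Main

/-- **Proposition 2** (type-ii-a inputs). Assume `J¹ ≠ 0`. For `2 ≤ k₁` with
`2·k₁ ≤ L` and any `k₁`-candidate `Q`, the coefficient of `Q` vanishes on every
`(k₁,ℓ₂)`-support Pauli product that contains `X` or `Y` on one edge (non-`Z` edge),
only `Z` or `I` on the other edge (`Z` edge), and at least two `Z`'s on its `Z` edge. -/
theorem prop_type_ii_a (L : ℕ) [NeZero L] (J1 J2 hx hz : ℝ) (hJ1 : J1 ≠ 0)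
    (k₁ : ℕ) (hk₁ : 2 ≤ k₁) (hk₁L : 2 * k₁ ≤ L)
    (Q : Matrix (Site L → Fin 2) (Site L → Fin 2) ℂ)
    (hQ : IsCandidate J1 J2 hx hz k₁ Q)
    (ℓ₂ : ℕ) (hℓ₂1 : 1 ≤ ℓ₂) (hℓ₂L : ℓ₂ ≤ L)
    (A : Site L → PauliOp) (r : Site L)
    (hsupp : IsSupportedAt A r k₁ ℓ₂)
    (htype :
      (HasXYOn A (upperEdge r) ∧ AllZIOn A (lowerEdge r k₁) ∧ TwoZOn A (lowerEdge r k₁))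
      ∨ (HasXYOn A (lowerEdge r k₁) ∧ AllZIOn A (upperEdge r) ∧ TwoZOn A (upperEdge r))) :
    coeff Q A = 0 := by
  obtain ⟨hQc, hQ2⟩ := hQ
  have hk₁L' : k₁ < L := by omega
  have hcast : ∀ m n : ℕ, m < L → n < L → (m : ZMod L) = (n : ZMod L) → m = n :=
    fun m n hm hn h => cast_row_inj hm hn h
  have rowNe : ∀ (y : ZMod L) (m n : ℕ), m < L → n < L → m ≠ n →
      y + (m : ZMod L) ≠ y + (n : ZMod L) := by
    intro y m n hm hn hmn h
    exact hmn (hcast m n hm hn (add_left_cancel h))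
  have hk1cast : ((k₁ - 1 : ℕ) : ZMod L) = (k₁ : ZMod L) - 1 := by
    rw [Nat.cast_sub (by omega)]; norm_num
  have hbox := hsupp.1
  rcases htype with ⟨⟨p, hp1, hpXY⟩, hallZ, z1, z2, hz12, hz1r, hz2r, hz1, hz2⟩ |
                    ⟨⟨p, hp1, hpXY⟩, hallZ, z1, z2, hz12, hz1r, hz2r, hz1, hz2⟩
  · -- Case 1 : non-Z edge is the upper edge
    have hp1' : p.1 = r.1 := hp1
    set x : ZMod L := r.1 - 1 with hx_def
    set u : Site L := (r.1 - 1, p.2) with hu_def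
    have hu1 : u.1 = x := rfl
    have hu2 : u.2 = p.2 := rfl
    have hr1x : r.1 = x + ((1 : ℕ) : ZMod L) := by rw [hx_def]; push_cast; ring
    have hlowx : lowerEdge r k₁ = x + (k₁ : ZMod L) := by
      show r.1 + ((k₁ - 1 : ℕ) : ZMod L) = x + (k₁ : ZMod L)
      rw [hk1cast, hr1x]; push_cast; ring
    have hAu : A u = PauliOp.I := by
      by_contra h
      obtain ⟨⟨m, hm, hrow⟩, -⟩ := hbox u h
      rw [hu1, hr1x] at hrow
      exact rowNe x 0 (m + 1) (by omega) (by omega) (by omega)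
        (by push_cast; linear_combination hrow)
    have hup : u ≠ p := by
      intro h
      have h1 := congrArg Prod.fst h
      rw [hu1, hp1', hr1x] at h1
      exact rowNe x 0 1 (by omega) (by omega) (by omega)
        (by push_cast; linear_combination h1)
    set B : Site L → PauliOp :=
      fun s => if s = u then PauliOp.Z else if s = p then mulP (A s) PauliOp.Z else A s
      with hB_def
    have hBu : B u = PauliOp.Z := by rw [hB_def]; simp
    have hBp : B p = mulP (A p) PauliOp.Z := by
      show (if p = u then PauliOp.Z else if p = p then mulP (A p) PauliOp.Z else A p)
        = mulP (A p) PauliOp.Z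
      rw [if_neg (fun h : p = u => hup h.symm), if_pos rfl]
    have hBother : ∀ s, s ≠ u → s ≠ p → B s = A s := by
      intro s h1 h2
      show (if s = u then PauliOp.Z else if s = p then mulP (A s) PauliOp.Z else A s) = A s
      rw [if_neg h1, if_neg h2]
    have hz1x : z1.1 = x + (k₁ : ZMod L) := by rw [hz1r, hlowx]
    have hz2x : z2.1 = x + (k₁ : ZMod L) := by rw [hz2r, hlowx]
    have hz1u : z1 ≠ u := by
      intro h
      have h1 := congrArg Prod.fst h
      rw [hz1x, hu1] at h1
      exact rowNe x k₁ 0 (by omega) (by omega) (by omega)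
        (by push_cast; linear_combination h1)
    have hz2u : z2 ≠ u := by
      intro h
      have h1 := congrArg Prod.fst h
      rw [hz2x, hu1] at h1
      exact rowNe x k₁ 0 (by omega) (by omega) (by omega)
        (by push_cast; linear_combination h1)
    have hz1p : z1 ≠ p := by
      intro h
      have h1 := congrArg Prod.fst h
      rw [hz1x, hp1', hr1x] at h1
      exact rowNe x k₁ 1 (by omega) (by omega) (by omega)
        (by push_cast; linear_combination h1)
    have hz2p : z2 ≠ p := by
      intro h
      have h1 := congrArg Prod.fst h
      rw [hz2x, hp1', hr1x] at h1
      exact rowNe x k₁ 1 (by omega) (by omega) (by omega)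
        (by push_cast; linear_combination h1)
    have hBz1 : B z1 = PauliOp.Z := by rw [hBother z1 hz1u hz1p, hz1]
    have hBz2 : B z2 = PauliOp.Z := by rw [hBother z2 hz2u hz2p, hz2]
    have hXYlem : ∀ q, B q = PauliOp.X ∨ B q = PauliOp.Y →
        ∃ n : ℕ, 1 ≤ n ∧ n + 1 ≤ k₁ ∧ q.1 = x + (n : ZMod L) := by
      intro q hq
      by_cases hqu : q = u
      · rw [hqu, hBu] at hq
        rcases hq with h | h <;> exact absurd h (by simp)
      · by_cases hqp : q = p
        · refine ⟨1, le_refl 1, by omega, ?_⟩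
          rw [hqp, hp1', hr1x]
        · rw [hBother q hqu hqp] at hq
          have hqI : A q ≠ PauliOp.I := by rcases hq with h | h <;> rw [h] <;> simp
          obtain ⟨⟨m, hm, hrow⟩, -⟩ := hbox q hqI
          have hm' : m ≠ k₁ - 1 := by
            intro he
            have hql : q.1 = lowerEdge r k₁ := by
              show q.1 = r.1 + ((k₁ - 1 : ℕ) : ZMod L)
              rw [hrow, he]
            have := hallZ q hql
            rcases hq with h | h <;> rw [h] at this <;>
              rcases this with h' | h' <;> exact PauliOp.noConfusion h'
          refine ⟨m + 1, by omega, by omega, ?_⟩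
          rw [hrow, hr1x]; push_cast; ring
    have hadjlem : ∀ v, (B v = PauliOp.X ∨ B v = PauliOp.Y) → v.2 = u.2 →
        (v.1 = u.1 + 1 → u = u ∧ v = (u.1 + 1, u.2)) ∧
        (u.1 = v.1 + 1 → v = u ∧ u = (u.1 + 1, u.2)) := by
      intro v hv hv2
      constructor
      · intro h1; exact ⟨rfl, Prod.ext_iff.mpr ⟨h1, hv2⟩⟩
      · intro h1
        exfalso
        obtain ⟨n, hn1, hnk, hrow⟩ := hXYlem v hv
        rw [hrow, hu1] at h1
        exact rowNe x 0 (n + 1) (by omega) (by omega) (by omega)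
          (by push_cast; linear_combination h1)
    have hu1p : ((u.1 + 1 : ZMod L), u.2) = p := by
      refine Prod.ext_iff.mpr ⟨?_, rfl⟩
      show u.1 + 1 = p.1
      rw [hu1, hp1', hr1x]; push_cast; ring
    have hspc : (B u = PauliOp.Z
          ∧ (B (u.1 + 1, u.2) = PauliOp.X ∨ B (u.1 + 1, u.2) = PauliOp.Y))
        ∨ ((B u = PauliOp.X ∨ B u = PauliOp.Y) ∧ B (u.1 + 1, u.2) = PauliOp.Z) := by
      refine Or.inl ⟨hBu, ?_⟩
      rw [show ((u.1 + 1 : ZMod L), u.2) = p from hu1p, hBp]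
      rcases hpXY with h | h <;> rw [h]
      · exact Or.inr rfl
      · exact Or.inl rfl
    have hres := master J1 J2 hx hz hJ1 k₁ hk₁ hk₁L Q hQc hQ2 B x u z1 z2 u hBu
      (Or.inl ⟨hu1, hz1x, hz2x⟩) hBz1 hBz2 hz12 hXYlem hadjlem hspc
    rw [show twoSiteZZ u ((u.1 + 1 : ZMod L), u.2) = twoSiteZZ u p from by rw [hu1p]] at hres
    rwa [show (fun s => mulP (B s) (twoSiteZZ u p s)) = A from by
      rw [hB_def]; exact bond_cancel A u p hup hAu] at hres
  · -- Case 2 : non-Z edge is the lower edge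
    have hp1' : p.1 = r.1 + ((k₁ - 1 : ℕ) : ZMod L) := hp1
    set x : ZMod L := r.1 with hx_def
    set u : Site L := (p.1 + 1, p.2) with hu_def
    have hu2 : u.2 = p.2 := rfl
    have hu1 : u.1 = x + (k₁ : ZMod L) := by
      show p.1 + 1 = x + (k₁ : ZMod L)
      rw [hp1', hk1cast]; ring
    have hAu : A u = PauliOp.I := by
      by_contra h
      obtain ⟨⟨m, hm, hrow⟩, -⟩ := hbox u h
      rw [hu1] at hrow
      exact rowNe x k₁ m (by omega) (by omega) (by omega)
        (by push_cast; linear_combination hrow)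
    have hup : u ≠ p := by
      intro h
      have h1 := congrArg Prod.fst h
      rw [hu1, hp1'] at h1
      exact rowNe x k₁ (k₁ - 1) (by omega) (by omega) (by omega)
        (by rw [hk1cast] at h1; push_cast [hk1cast]; linear_combination h1)
    set B : Site L → PauliOp :=
      fun s => if s = u then PauliOp.Z else if s = p then mulP (A s) PauliOp.Z else A s
      with hB_def
    have hBu : B u = PauliOp.Z := by rw [hB_def]; simp
    have hBp : B p = mulP (A p) PauliOp.Z := by
      show (if p = u then PauliOp.Z else if p = p then mulP (A p) PauliOp.Z else A p)
        = mulP (A p) PauliOp.Z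
      rw [if_neg (fun h : p = u => hup h.symm), if_pos rfl]
    have hBother : ∀ s, s ≠ u → s ≠ p → B s = A s := by
      intro s h1 h2
      show (if s = u then PauliOp.Z else if s = p then mulP (A s) PauliOp.Z else A s) = A s
      rw [if_neg h1, if_neg h2]
    have hz1x : z1.1 = x := hz1r
    have hz2x : z2.1 = x := hz2r
    have hz1u : z1 ≠ u := by
      intro h
      have h1 := congrArg Prod.fst h
      rw [hz1x, hu1] at h1
      exact rowNe x 0 k₁ (by omega) (by omega) (by omega)
        (by push_cast; linear_combination h1)
    have hz2u : z2 ≠ u := by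
      intro h
      have h1 := congrArg Prod.fst h
      rw [hz2x, hu1] at h1
      exact rowNe x 0 k₁ (by omega) (by omega) (by omega)
        (by push_cast; linear_combination h1)
    have hz1p : z1 ≠ p := by
      intro h
      have h1 := congrArg Prod.fst h
      rw [hz1x, hp1'] at h1
      exact rowNe x 0 (k₁ - 1) (by omega) (by omega) (by omega)
        (by rw [hk1cast] at h1; push_cast [hk1cast]; linear_combination h1)
    have hz2p : z2 ≠ p := by
      intro h
      have h1 := congrArg Prod.fst h
      rw [hz2x, hp1'] at h1
      exact rowNe x 0 (k₁ - 1) (by omega) (by omega) (by omega)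
        (by rw [hk1cast] at h1; push_cast [hk1cast]; linear_combination h1)
    have hBz1 : B z1 = PauliOp.Z := by rw [hBother z1 hz1u hz1p, hz1]
    have hBz2 : B z2 = PauliOp.Z := by rw [hBother z2 hz2u hz2p, hz2]
    have hXYlem : ∀ q, B q = PauliOp.X ∨ B q = PauliOp.Y →
        ∃ n : ℕ, 1 ≤ n ∧ n + 1 ≤ k₁ ∧ q.1 = x + (n : ZMod L) := by
      intro q hq
      by_cases hqu : q = u
      · rw [hqu, hBu] at hq
        rcases hq with h | h <;> exact absurd h (by simp)
      · by_cases hqp : q = p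
        · refine ⟨k₁ - 1, by omega, by omega, ?_⟩
          rw [hqp, hp1']
        · rw [hBother q hqu hqp] at hq
          have hqI : A q ≠ PauliOp.I := by rcases hq with h | h <;> rw [h] <;> simp
          obtain ⟨⟨m, hm, hrow⟩, -⟩ := hbox q hqI
          have hm' : m ≠ 0 := by
            intro he
            have hql : q.1 = upperEdge r := by
              show q.1 = r.1
              rw [hrow, he]; push_cast; ring
            have := hallZ q hql
            rcases hq with h | h <;> rw [h] at this <;>
              rcases this with h' | h' <;> exact PauliOp.noConfusion h'
          exact ⟨m, by omega, by omega, hrow⟩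
    have hadjlem : ∀ v, (B v = PauliOp.X ∨ B v = PauliOp.Y) → v.2 = u.2 →
        (v.1 = u.1 + 1 → u = p ∧ v = (p.1 + 1, p.2)) ∧
        (u.1 = v.1 + 1 → v = p ∧ u = (p.1 + 1, p.2)) := by
      intro v hv hv2
      constructor
      · intro h1
        exfalso
        obtain ⟨n, hn1, hnk, hrow⟩ := hXYlem v hv
        rw [hrow] at h1
        rw [hu1] at h1
        exact rowNe x (k₁ + 1) n (by omega) (by omega) (by omega)
          (by push_cast; linear_combination h1.symm)
      · intro h1
        refine ⟨?_, hu_def⟩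
        have hv1 : v.1 = p.1 := by
          have : u.1 = p.1 + 1 := by rw [hu_def]
          rw [this] at h1
          exact (add_right_cancel h1.symm)
        exact Prod.ext_iff.mpr ⟨hv1, hv2.trans hu2⟩
    have hspc : (B p = PauliOp.Z
          ∧ (B (p.1 + 1, p.2) = PauliOp.X ∨ B (p.1 + 1, p.2) = PauliOp.Y))
        ∨ ((B p = PauliOp.X ∨ B p = PauliOp.Y) ∧ B (p.1 + 1, p.2) = PauliOp.Z) := by
      refine Or.inr ⟨?_, by rw [← hu_def, hBu]⟩
      rw [hBp]
      rcases hpXY with h | h <;> rw [h]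
      · exact Or.inr rfl
      · exact Or.inl rfl
    have hres := master J1 J2 hx hz hJ1 k₁ hk₁ hk₁L Q hQc hQ2 B x u z1 z2 p hBu
      (Or.inr ⟨hu1, hz1x, hz2x⟩) hBz1 hBz2 hz12 hXYlem hadjlem hspc
    rw [show twoSiteZZ p ((p.1 + 1 : ZMod L), p.2) = twoSiteZZ u p from by
      rw [← hu_def]; exact twoSiteZZ_comm p u] at hres
    rwa [show (fun s => mulP (B s) (twoSiteZZ u p s)) = A from by
      rw [hB_def]; exact bond_cancel A u p hup hAu] at hres

end Ising2D
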